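/- arXiv:math/9904161 — 4 statements merged into one kernel-verified Lean document; each statement's English description precedes it below -/
import Mathlib

section
/- Fix integers n ≥ 1 and d ≥ 2. Define polynomials in n variables by f_1 = x_1^d and f_i = x_{i-1} − x_i^d for i = 2, …, n, and set Φ(x) := max_{1≤i≤n} |f_i(x)| for x ∈ ℝ^n. Then for every real M < d^n and all constants C > 0 and ε > 0, there exists x ∈ ℝ^n with 0 < ‖x‖ < ε and Φ(x) < C·‖x‖^M. Equivalently, the Łojasiewicz exponent of f_1, …, f_n at the origin is at least d^n. (Concretely, along the curve p(t) = (t^(d^(n-1)), t^(d^(n-2)), …, t) one has f_i(p(t)) = 0 for i ≥ 2 and f_1(p(t)) = t^(d^n).) -/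
/-!
Along the curve `t ↦ (t ^ d ^ (n - 1), …, t ^ d, t)` every `f i` with `i ≥ 2` vanishes while
`f 1 = t ^ d ^ n`, and the curve has norm at least `t` (its last coordinate) and tends to `0`.
Writing `t ^ d ^ n = t ^ (d ^ n - max M 0) * t ^ max M 0`, the first factor tends to `0` and
the second is at most `‖x‖ ^ M` once `t ≤ ‖x‖ ≤ 1`, so `Φ` eventually drops below `C * ‖x‖ ^ M`.
-/

open Filter Topology MvPolynomial

namespace WorstExample

variable (n d : ℕ)

noncomputable def poly (i : Fin n) : MvPolynomial (Fin n) ℝ :=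
  if _ : (i : ℕ) = 0 then X i ^ d
  else X (⟨(i : ℕ) - 1, lt_of_le_of_lt (Nat.sub_le _ _) i.isLt⟩ : Fin n) - X i ^ d

noncomputable def curve (t : ℝ) : EuclideanSpace ℝ (Fin n) :=
  WithLp.toLp 2 fun j => t ^ d ^ (n - 1 - (j : ℕ))

lemma curve_apply (t : ℝ) (j : Fin n) : curve n d t j = t ^ d ^ (n - 1 - (j : ℕ)) := rfl

lemma eval_poly_curve (t : ℝ) (i : Fin n) :
    eval (fun j => curve n d t j) (poly n d i) = if (i : ℕ) = 0 then t ^ d ^ n else 0 := by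
  have hi := i.isLt
  unfold poly
  split_ifs with h
  · rw [map_pow, eval_X, curve_apply, ← pow_mul, ← pow_succ, h]
    congr 2
    omega
  · rw [map_sub, map_pow, eval_X, eval_X, curve_apply, curve_apply, ← pow_mul, ← pow_succ,
      sub_eq_zero]
    congr 2
    simp only
    omega

lemma le_norm_curve (hn : 1 ≤ n) {t : ℝ} (ht : 0 ≤ t) : t ≤ ‖curve n d t‖ := by
  have hlast : curve n d t ⟨n - 1, by omega⟩ = t := by simp [curve_apply]
  calc t = ‖curve n d t ⟨n - 1, by omega⟩‖ := by rw [hlast, Real.norm_of_nonneg ht]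
    _ ≤ ‖curve n d t‖ := PiLp.norm_apply_le _ _

lemma continuous_curve : Continuous (curve n d) :=
  (PiLp.continuous_toLp 2 _).comp (continuous_pi fun _ => continuous_pow _)

lemma curve_zero (hd : d ≠ 0) : curve n d 0 = 0 := by
  ext j
  simp [curve_apply, hd]

end WorstExample

lemma eventually_rpow_lt_mul_rpow {D M C : ℝ} (hMD : M < D) (hD : 0 < D) (hC : 0 < C) :
    ∀ᶠ t in 𝓝[>] (0 : ℝ), ∀ r, t ≤ r → r ≤ 1 → t ^ D < C * r ^ M := by
  set M₀ := max M 0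
  have he : 0 < D - M₀ := sub_pos.2 (max_lt hMD hD)
  have hlim : Tendsto (fun t : ℝ => t ^ (D - M₀)) (𝓝[>] 0) (𝓝 0) := by
    have := (Real.continuousAt_rpow_const 0 (D - M₀) (Or.inr he.le)).tendsto
    rw [Real.zero_rpow he.ne'] at this
    exact this.mono_left nhdsWithin_le_nhds
  filter_upwards [self_mem_nhdsWithin, hlim.eventually (gt_mem_nhds hC)] with t ht htC r htr hr1
  rw [Set.mem_Ioi] at ht
  calc t ^ D = t ^ (D - M₀) * t ^ M₀ := by rw [← Real.rpow_add ht, sub_add_cancel]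
    _ < C * t ^ M₀ := mul_lt_mul_of_pos_right htC (Real.rpow_pos_of_pos ht _)
    _ ≤ C * r ^ M₀ := by gcongr
    _ ≤ C * r ^ M := mul_le_mul_of_nonneg_left
      (Real.rpow_le_rpow_of_exponent_ge (ht.trans_le htr) hr1 (le_max_left M 0)) hC.le

open WorstExample in
/-- **The Łojasiewicz exponent of the worst-case example is at least `d^n`.**
For `n ≥ 1`, `d ≥ 2` let `f 1 = x₁^d` and `f i = x_{i-1} - x_i^d` for `2 ≤ i ≤ n` (indexed
here by `Fin n`), and `Φ x = max_i |f i x|`.  Then for every real `M < d^n` and all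
`C, ε > 0` there is `x` with `0 < ‖x‖ < ε` and `Φ x < C * ‖x‖ ^ M`. -/
theorem worst_example_lojasiewicz_exponent
    (n d : ℕ) (hn : 1 ≤ n) (hd : 2 ≤ d)
    (f : Fin n → MvPolynomial (Fin n) ℝ)
    (hf : ∀ i : Fin n, f i = if _ : (i : ℕ) = 0 then MvPolynomial.X i ^ d
      else MvPolynomial.X (⟨(i : ℕ) - 1, lt_of_le_of_lt (Nat.sub_le _ _) i.isLt⟩ : Fin n)
        - MvPolynomial.X i ^ d) :
    ∀ M : ℝ, M < (d : ℝ) ^ n → ∀ C > (0 : ℝ), ∀ ε > (0 : ℝ),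
      ∃ x : EuclideanSpace ℝ (Fin n), 0 < ‖x‖ ∧ ‖x‖ < ε ∧
        Finset.univ.sup' ⟨⟨0, hn⟩, Finset.mem_univ _⟩
            (fun i => |MvPolynomial.eval (fun j => x j) (f i)|)
          < C * ‖x‖ ^ M := by
  intro M hM C hC ε hε
  obtain rfl : f = poly n d := funext hf
  have hnorm : Tendsto (fun t => ‖curve n d t‖) (𝓝[>] 0) (𝓝 0) := by
    have := ((continuous_curve n d).tendsto 0).norm
    rw [curve_zero n d (by omega), norm_zero] at this
    exact this.mono_left nhdsWithin_le_nhds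
  obtain ⟨t, ht, htε, ht1, hkey⟩ := (eventually_mem_nhdsWithin.and
    ((hnorm.eventually (gt_mem_nhds hε)).and ((hnorm.eventually (gt_mem_nhds one_pos)).and
      (eventually_rpow_lt_mul_rpow hM (by positivity) hC)))).exists
  rw [Set.mem_Ioi] at ht
  refine ⟨curve n d t, ht.trans_le (le_norm_curve n d hn ht.le), htε, ?_⟩
  calc _ ≤ t ^ d ^ n := Finset.sup'_le _ _ fun i _ => by
        rw [eval_poly_curve]
        split_ifs <;> simp [abs_of_nonneg, ht.le]
    _ = t ^ ((d : ℝ) ^ n) := by norm_cast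
    _ < C * ‖curve n d t‖ ^ M := hkey _ (le_norm_curve n d hn ht.le) ht1.le
end

section
/- Fix integers n ≥ 1 and d ≥ 2. Define polynomials in n variables by f_1 = x_1^d and f_i = x_{i-1} − x_i^d for i = 2, …, n, and set F := f_1^2 + f_2^2 + ⋯ + f_n^2, a real polynomial of degree 2d. Then F(x) > 0 for every x ∈ ℝ^n with x ≠ 0 (so F has an isolated real zero at the origin), and for every real M < 2·d^n and all constants C > 0 and ε > 0, there exists x ∈ ℝ^n with 0 < ‖x‖ < ε and F(x) < C·‖x‖^M; that is, the Łojasiewicz exponent of F at the origin is at least 2·d^n. -/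
/-!
If every `f_i` vanishes at `x`, then `x_1 = 0` from `f_1`, and inductively `x_i = 0` from
`f_i = x_{i-1} - x_i^d`; so the sum of squares `F` is positive off the origin.
Along the curve `x_j = t^(d^(n-j))` every `f_i` with `i ≥ 2` vanishes while `f_1 = t^(d^n)`,
so `F = t^(2 d^n)` there, whereas `‖x‖ ≥ x_n = t`; hence `F ≥ C ‖x‖^M` fails near `0` for every
`M < 2 d^n`. The degree `2d` is attained: setting all variables but `x_n` to zero leaves
`x_n^(2d)`, and substituting a line into a polynomial does not raise its degree.
-/

open MvPolynomial Filter Topology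

namespace MvPolynomial

variable {σ R : Type*} [CommSemiring R]

theorem natDegree_aeval_le_totalDegree (p : MvPolynomial σ R) {g : σ → Polynomial R}
    (hg : ∀ j, (g j).natDegree ≤ 1) : (aeval g p).natDegree ≤ p.totalDegree := by
  conv_lhs => rw [p.as_sum, map_sum]
  refine Polynomial.natDegree_sum_le_of_forall_le _ _ fun m hm => ?_
  rw [aeval_monomial, Polynomial.algebraMap_eq]
  refine (Polynomial.natDegree_C_mul_le _ _).trans <| (Polynomial.natDegree_prod_le _ _).trans ?_
  refine le_trans ?_ (le_totalDegree hm)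
  refine Finset.sum_le_sum fun j _ => (Polynomial.natDegree_pow_le).trans ?_
  simpa using Nat.mul_le_mul_left (m j) (hg j)

theorem totalDegree_X_pow_le (s : σ) (k : ℕ) : (X s ^ k : MvPolynomial σ R).totalDegree ≤ k := by
  simpa [X_pow_eq_monomial] using totalDegree_monomial_le (Finsupp.single s k) (1 : R)

end MvPolynomial

section ChainPoly

variable (R : Type*) [CommRing R] {n : ℕ} (d : ℕ)

noncomputable def chainPoly (i : Fin n) : MvPolynomial (Fin n) R :=
  if _ : (i : ℕ) = 0 then X i ^ d
  else X ⟨i - 1, by omega⟩ - X i ^ d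

noncomputable def chainSumSq (n : ℕ) : MvPolynomial (Fin n) R :=
  ∑ i, chainPoly R d i ^ 2

def chainCurve {A : Type*} [Monoid A] (t : A) : Fin n → A :=
  fun j => t ^ d ^ (n - 1 - j)

variable {R d} {A : Type*} [CommRing A] [Algebra R A]

theorem aeval_chainPoly (x : Fin n → A) (i : Fin n) :
    aeval x (chainPoly R d i) =
      if _ : (i : ℕ) = 0 then x i ^ d else x ⟨i - 1, by omega⟩ - x i ^ d := by
  unfold chainPoly
  split_ifs <;> simp

theorem totalDegree_chainPoly_le (hd : 1 ≤ d) (i : Fin n) :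
    (chainPoly R d i).totalDegree ≤ d := by
  unfold chainPoly
  split_ifs
  · exact totalDegree_X_pow_le _ _
  · refine (totalDegree_sub _ _).trans (max_le ?_ (totalDegree_X_pow_le _ _))
    simpa using (totalDegree_X_pow_le (R := R) _ 1).trans hd

theorem eq_zero_of_forall_aeval_chainPoly_eq_zero [IsReduced A] {x : Fin n → A}
    (h : ∀ i, aeval x (chainPoly R d i) = 0) : x = 0 := by
  suffices ∀ k (hk : k < n), x ⟨k, hk⟩ = 0 from funext fun i => this i i.isLt
  intro k
  induction k with
  | zero =>
    intro hk
    have := h ⟨0, hk⟩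
    simp only [aeval_chainPoly, dite_true] at this
    exact eq_zero_of_pow_eq_zero this
  | succ k ih =>
    intro hk
    have := h ⟨k + 1, hk⟩
    simp only [aeval_chainPoly, Nat.add_one_ne_zero, dite_false, Nat.add_sub_cancel,
      ih (by omega), zero_sub, neg_eq_zero] at this
    exact eq_zero_of_pow_eq_zero this

theorem aeval_chainPoly_chainCurve (t : A) (i : Fin n) :
    aeval (chainCurve d t) (chainPoly R d i) = if (i : ℕ) = 0 then t ^ d ^ n else 0 := by
  rw [aeval_chainPoly]
  split_ifs with hi
  · simp only [chainCurve, hi, ← pow_mul, ← pow_succ]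
    congr 2
    omega
  · simp only [chainCurve, ← pow_mul, ← pow_succ]
    rw [show n - 1 - (i - 1) = n - 1 - i + 1 by omega, sub_self]

theorem aeval_chainSumSq_chainCurve (hn : 1 ≤ n) (t : A) :
    aeval (chainCurve d t) (chainSumSq R d n) = t ^ (2 * d ^ n) := by
  simp only [chainSumSq, map_sum, map_pow, aeval_chainPoly_chainCurve]
  rw [Finset.sum_eq_single (⟨0, hn⟩ : Fin n) (fun i _ hi => by simp [Fin.ext_iff.not.mp hi])
    (by simp)]
  simp [← pow_mul, mul_comm]

theorem aeval_chainSumSq_single_last (hn : 1 ≤ n) (hd : 1 ≤ d) :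
    aeval (Pi.single (⟨n - 1, by omega⟩ : Fin n) (Polynomial.X : Polynomial R))
      (chainSumSq R d n) = Polynomial.X ^ (2 * d) := by
  simp only [chainSumSq, map_sum, map_pow, aeval_chainPoly]
  rw [Finset.sum_eq_single (⟨n - 1, by omega⟩ : Fin n)]
  · split_ifs with h0
    · simp [← pow_mul, mul_comm]
    · rw [Pi.single_eq_of_ne (by simp [Fin.ext_iff]; omega)]
      simp [← pow_mul, mul_comm]
  · intro i _ hi
    have hi' : (i : ℕ) < n - 1 := by
      have : (i : ℕ) ≠ n - 1 := fun h => hi (Fin.ext h)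
      omega
    split_ifs
    · simp [Pi.single_eq_of_ne hi, zero_pow (by omega : d ≠ 0)]
    · rw [Pi.single_eq_of_ne hi, Pi.single_eq_of_ne (by simp [Fin.ext_iff]; omega)]
      simp [zero_pow (by omega : d ≠ 0)]
  · simp

theorem totalDegree_chainSumSq [Nontrivial R] (hn : 1 ≤ n) (hd : 1 ≤ d) :
    (chainSumSq R d n).totalDegree = 2 * d := by
  refine le_antisymm ?_ ?_
  · refine (totalDegree_finsetSum _ _).trans (Finset.sup_le fun i _ => ?_)
    exact (totalDegree_pow _ 2).trans (Nat.mul_le_mul_left 2 (totalDegree_chainPoly_le hd i))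
  · have hX (j : Fin n) :
        Polynomial.natDegree ((Pi.single ⟨n - 1, by omega⟩ Polynomial.X : Fin n → Polynomial R) j)
          ≤ 1 := by
      rcases eq_or_ne j ⟨n - 1, by omega⟩ with rfl | hj
      · simp
      · simp [Pi.single_eq_of_ne hj]
    have := natDegree_aeval_le_totalDegree (chainSumSq R d n) hX
    rwa [aeval_chainSumSq_single_last hn hd, Polynomial.natDegree_X_pow] at this

theorem eval_chainSumSq_pos [LinearOrder R] [IsStrictOrderedRing R] {x : Fin n → R}
    (hx : x ≠ 0) : 0 < eval x (chainSumSq R d n) := by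
  simp only [chainSumSq, map_sum, map_pow]
  refine (Finset.sum_nonneg fun i _ => sq_nonneg _).lt_of_ne fun h => hx ?_
  refine eq_zero_of_forall_aeval_chainPoly_eq_zero (R := R) (d := d) fun i => ?_
  rw [aeval_eq_eval]
  exact pow_eq_zero_iff two_ne_zero |>.mp
    ((Finset.sum_eq_zero_iff_of_nonneg fun i _ => sq_nonneg _).mp h.symm i (Finset.mem_univ i))

end ChainPoly

theorem exists_lt_mul_norm_rpow_of_curve {E : Type*} [NormedAddCommGroup E] {g : E → ℝ}
    {γ : ℝ → E} {N M C ε : ℝ} (hγ : Tendsto γ (𝓝[>] 0) (𝓝 0)) (hγt : ∀ t > 0, t ≤ ‖γ t‖)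
    (hg : ∀ t > 0, g (γ t) = t ^ N) (hN : 0 < N) (hMN : M < N) (hC : 0 < C) (hε : 0 < ε) :
    ∃ x, 0 < ‖x‖ ∧ ‖x‖ < ε ∧ g x < C * ‖x‖ ^ M := by
  -- with `M' ≥ 0`, `t ≤ ‖γ t‖` gives `t ^ M' ≤ ‖γ t‖ ^ M'`, and `‖γ t‖ ≤ 1` then passes to `M`
  set M' := max M 0
  have hM' : 0 < N - M' := sub_pos.mpr (max_lt hMN hN)
  have hsmall : ∀ᶠ t in 𝓝[>] 0, ‖γ t‖ < min ε 1 := by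
    refine (tendsto_order.1 ?_).2 _ (lt_min hε one_pos)
    simpa using hγ.norm
  have hgap : ∀ᶠ t in 𝓝[>] 0, t ^ (N - M') < C := by
    have : Tendsto (fun t : ℝ => t ^ (N - M')) (𝓝[>] 0) (𝓝 0) := by
      simpa [Real.zero_rpow hM'.ne'] using
        (Real.continuousAt_rpow_const 0 (N - M') (Or.inr hM'.le)).tendsto.mono_left
          nhdsWithin_le_nhds
    exact (tendsto_order.1 this).2 _ hC
  obtain ⟨t, (ht : 0 < t), hγε, htC⟩ := (eventually_mem_nhdsWithin.and (hsmall.and hgap)).exists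
  have hγ0 : 0 < ‖γ t‖ := ht.trans_le (hγt t ht)
  refine ⟨γ t, hγ0, hγε.trans_le (min_le_left _ _), ?_⟩
  calc g (γ t) = t ^ (N - M') * t ^ M' := by rw [hg t ht, ← Real.rpow_add ht, sub_add_cancel]
    _ < C * t ^ M' := mul_lt_mul_of_pos_right htC (Real.rpow_pos_of_pos ht _)
    _ ≤ C * ‖γ t‖ ^ M' := by gcongr; exact hγt t ht
    _ ≤ C * ‖γ t‖ ^ M := mul_le_mul_of_nonneg_left (Real.rpow_le_rpow_of_exponent_ge hγ0
        (hγε.le.trans (min_le_right _ _)) (le_max_left M 0)) hC.le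

/-- **The sum-of-squares worst-case example.**
For `n ≥ 1`, `d ≥ 2` let `f 1 = x₁^d`, `f i = x_{i-1} - x_i^d` for `2 ≤ i ≤ n` (indexed
here by `Fin n`), and `F = Σ_i (f i)^2`, a polynomial of degree `2d`.  Then `F x > 0` for
every `x ≠ 0`, and for every real `M < 2 d^n` and all `C, ε > 0` there is `x` with
`0 < ‖x‖ < ε` and `F x < C * ‖x‖ ^ M`; i.e. the Łojasiewicz exponent of `F` at the origin
is at least `2 d^n`. -/
theorem worst_example_sum_of_squares
    (n d : ℕ) (hn : 1 ≤ n) (hd : 2 ≤ d)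
    (f : Fin n → MvPolynomial (Fin n) ℝ)
    (hf : ∀ i : Fin n, f i = if _ : (i : ℕ) = 0 then MvPolynomial.X i ^ d
      else MvPolynomial.X (⟨(i : ℕ) - 1, lt_of_le_of_lt (Nat.sub_le _ _) i.isLt⟩ : Fin n)
        - MvPolynomial.X i ^ d)
    (F : MvPolynomial (Fin n) ℝ) (hF : F = ∑ i : Fin n, f i ^ 2) :
    F.totalDegree = 2 * d ∧
    (∀ x : EuclideanSpace ℝ (Fin n), x ≠ 0 →
      0 < MvPolynomial.eval (fun j => x j) F) ∧
    (∀ M : ℝ, M < 2 * (d : ℝ) ^ n → ∀ C > (0 : ℝ), ∀ ε > (0 : ℝ),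
      ∃ x : EuclideanSpace ℝ (Fin n), 0 < ‖x‖ ∧ ‖x‖ < ε ∧
        MvPolynomial.eval (fun j => x j) F < C * ‖x‖ ^ M) := by
  obtain rfl : f = chainPoly ℝ d := funext hf
  obtain rfl : F = chainSumSq ℝ d n := hF
  refine ⟨totalDegree_chainSumSq hn (by omega), fun x hx => eval_chainSumSq_pos ?_,
    fun M hM C hC ε hε => ?_⟩
  · exact fun h => hx (WithLp.ofLp_injective 2 h)
  set γ : ℝ → EuclideanSpace ℝ (Fin n) := fun t => WithLp.toLp 2 (chainCurve d t)
  refine exists_lt_mul_norm_rpow_of_curve (γ := γ) ?_ (fun t ht => ?_) (fun t ht => ?_)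
    (by positivity) hM hC hε
  · have hγ : Continuous γ := (PiLp.continuous_toLp 2 _).comp (by unfold chainCurve; fun_prop)
    have hγ0 : γ 0 = 0 := by
      ext j
      simp [γ, chainCurve, show d ≠ 0 by omega]
    exact hγ0 ▸ (hγ.tendsto 0).mono_left nhdsWithin_le_nhds
  · simpa [γ, chainCurve, abs_of_pos ht] using PiLp.norm_apply_le (γ t) ⟨n - 1, by omega⟩
  · rw [show 2 * (d : ℝ) ^ n = ((2 * d ^ n : ℕ) : ℝ) by push_cast; ring, Real.rpow_natCast,
      ← aeval_eq_eval, aeval_chainSumSq_chainCurve hn]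
end

section
/- Let π : ℂ → ℂ^n be an analytic map defined on a neighborhood of 0 with π(0) = 0, whose coordinate functions π_1, …, π_n are not all identically zero, and let f be a complex polynomial in n variables with f(0) = 0 such that f∘π is not identically zero near 0. Let M be the order of vanishing of f∘π at t = 0, and let m be the minimum over i (with π_i not identically zero) of the order of vanishing of π_i at t = 0. Then there exist constants C > 0 and δ > 0 such that |f(π(t))| ≥ C·‖π(t)‖^(M/m) for all t with 0 < |t| < δ. -/
open Filter Asymptotics

/-- **Łojasiewicz-type estimate along an analytic arc.**
Let `π : ℂ → ℂⁿ` be analytic near `0` with `π 0 = 0`, not all coordinates identically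
zero, and let `f` be a complex polynomial with `f 0 = 0` such that `f ∘ π` does not vanish
identically near `0`.  If `M` is the order of vanishing of `f ∘ π` at `0` (expressed here
by the factorization `f (π t) = t^M * g t` with `g` analytic, `g 0 ≠ 0`) and `m` is the
minimal order of vanishing of the nonzero coordinates `π i` at `0` (expressed by: every
coordinate either vanishes identically near `0` or has order `≥ m`, and some coordinate
has order exactly `m`), then `|f (π t)| ≥ C * ‖π t‖ ^ (M / m)` for `0 < |t| < δ` and some
`C, δ > 0`. -/
theorem lojasiewicz_along_arc
    (n : ℕ) (π : ℂ → EuclideanSpace ℂ (Fin n))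
    (hπan : ∀ i : Fin n, AnalyticAt ℂ (fun t => π t i) 0)
    (hπ0 : π 0 = 0)
    (f : MvPolynomial (Fin n) ℂ)
    (hf0 : MvPolynomial.eval (0 : Fin n → ℂ) f = 0)
    (M m : ℕ)
    (hM : ∃ g : ℂ → ℂ, AnalyticAt ℂ g 0 ∧ g 0 ≠ 0 ∧
      ∀ᶠ t in nhds (0 : ℂ), MvPolynomial.eval (fun i => π t i) f = t ^ M * g t)
    (hm_le : ∀ i : Fin n, (∀ᶠ t in nhds (0 : ℂ), π t i = 0) ∨
      ∃ k : ℕ, m ≤ k ∧ ∃ g : ℂ → ℂ, AnalyticAt ℂ g 0 ∧ g 0 ≠ 0 ∧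
        ∀ᶠ t in nhds (0 : ℂ), π t i = t ^ k * g t)
    (hm_eq : ∃ i : Fin n, ∃ g : ℂ → ℂ, AnalyticAt ℂ g 0 ∧ g 0 ≠ 0 ∧
      ∀ᶠ t in nhds (0 : ℂ), π t i = t ^ m * g t) :
    ∃ C > (0 : ℝ), ∃ δ > (0 : ℝ), ∀ t : ℂ, 0 < ‖t‖ → ‖t‖ < δ →
      ‖MvPolynomial.eval (fun i => π t i) f‖ ≥ C * ‖π t‖ ^ ((M : ℝ) / (m : ℝ)) := by
  obtain ⟨i₀, g₀, hg₀an, hg₀0, hg₀⟩ := hm_eq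
  have hm0 : m ≠ 0 := by
    intro h
    subst h
    have h1 := hg₀.self_of_nhds
    simp [hπ0] at h1
    exact hg₀0 h1.symm
  -- Each coordinate is O(t^m)
  have hOcoord : ∀ i : Fin n, (fun t : ℂ => π t i) =O[nhds 0] fun t => t ^ m := by
    intro i
    rcases hm_le i with h | ⟨k, hk, g, hgan, hg0, heq⟩
    · refine IsBigO.of_bound 1 ?_
      filter_upwards [h] with t ht
      simp [ht]
    · refine IsBigO.of_bound (‖g 0‖ + 1) ?_
      have hcont : ∀ᶠ t in nhds (0 : ℂ), ‖g t‖ ≤ ‖g 0‖ + 1 := by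
        have := hgan.continuousAt.tendsto
        have h2 : ∀ᶠ t in nhds (0 : ℂ), g t ∈ Metric.closedBall (g 0) 1 :=
          this.eventually_mem (Metric.closedBall_mem_nhds _ one_pos)
        filter_upwards [h2] with t ht
        have := Metric.mem_closedBall.1 ht
        calc ‖g t‖ ≤ ‖g 0‖ + ‖g t - g 0‖ := by
              simpa using norm_add_le (g 0) (g t - g 0)
          _ ≤ ‖g 0‖ + 1 := by
              have : dist (g t) (g 0) ≤ 1 := this
              rw [dist_eq_norm] at this; linarith
      have hball : ∀ᶠ t in nhds (0 : ℂ), ‖t‖ ≤ 1 := by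
        have h2 : ∀ᶠ t in nhds (0 : ℂ), t ∈ Metric.closedBall (0:ℂ) 1 :=
          Metric.closedBall_mem_nhds _ one_pos
        filter_upwards [h2] with t ht
        simpa using Metric.mem_closedBall.1 ht
      filter_upwards [heq, hcont, hball] with t ht hgt htle
      rw [ht]
      have h1 : ‖t ^ k * g t‖ = ‖t‖ ^ k * ‖g t‖ := by
        rw [norm_mul, norm_pow]
      rw [h1]
      have h2 : ‖t‖ ^ k ≤ ‖t‖ ^ m := pow_le_pow_of_le_one (norm_nonneg t) htle hk
      have h3 : (0:ℝ) ≤ ‖g 0‖ + 1 := by positivity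
      calc ‖t‖ ^ k * ‖g t‖ ≤ ‖t‖ ^ m * (‖g 0‖ + 1) := by
            exact mul_le_mul h2 hgt (norm_nonneg _) (by positivity)
        _ = (‖g 0‖ + 1) * ‖t ^ m‖ := by rw [norm_pow]; ring
  -- π itself is O(t^m)
  have hO : (fun t : ℂ => π t) =O[nhds 0] fun t => t ^ m := by
    have h1 : (fun t : ℂ => (fun i => π t i : Fin n → ℂ)) =O[nhds 0] fun t => t ^ m :=
      isBigO_pi.2 hOcoord
    have h2 := (((PiLp.continuousLinearEquiv 2 ℂ (fun _ : Fin n => ℂ)).symm :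
        (Fin n → ℂ) →L[ℂ] EuclideanSpace ℂ (Fin n))).isBigO_comp
      (fun t : ℂ => (fun i => π t i : Fin n → ℂ)) (nhds 0)
    have heq : (fun t : ℂ => ((PiLp.continuousLinearEquiv 2 ℂ (fun _ : Fin n => ℂ)).symm :
        (Fin n → ℂ) →L[ℂ] EuclideanSpace ℂ (Fin n)) (fun i => π t i)) = fun t => π t := by
      funext t
      ext i
      rfl
    rw [heq] at h2
    exact h2.trans h1
  obtain ⟨K, hK, hKb⟩ := hO.exists_pos
  rw [IsBigOWith] at hKb
  -- lower bound for f ∘ π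
  obtain ⟨g, hgan, hg0, hfeq⟩ := hM
  have hglow : ∀ᶠ t in nhds (0 : ℂ), ‖g 0‖ / 2 ≤ ‖g t‖ := by
    have := hgan.continuousAt.tendsto
    have h2 : ∀ᶠ t in nhds (0 : ℂ), g t ∈ Metric.ball (g 0) (‖g 0‖ / 2) := by
      refine this.eventually_mem (Metric.ball_mem_nhds _ ?_)
      simpa using norm_pos_iff.2 hg0
    filter_upwards [h2] with t ht
    have := Metric.mem_ball.1 ht
    rw [dist_eq_norm] at this
    have h3 : ‖g 0‖ ≤ ‖g t‖ + ‖g 0 - g t‖ := by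
      simpa using norm_add_le (g t) (g 0 - g t)
    rw [norm_sub_rev] at h3
    linarith
  -- pick δ
  have hall := hKb.and (hfeq.and hglow)
  rw [Metric.eventually_nhds_iff] at hall
  obtain ⟨δ, hδ, hδall⟩ := hall
  have hg0pos : (0:ℝ) < ‖g 0‖ := norm_pos_iff.2 hg0
  refine ⟨(‖g 0‖ / 2) / K ^ ((M:ℝ)/(m:ℝ)), by positivity, δ, hδ, ?_⟩
  intro t ht htδ
  have hdist : dist t 0 < δ := by simpa [dist_eq_norm] using htδ
  obtain ⟨hKt, hft, hgt⟩ := hδall hdist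
  rw [hft]
  have hKt' : ‖π t‖ ≤ K * ‖t‖ ^ m := by
    calc ‖π t‖ ≤ K * ‖t ^ m‖ := hKt
      _ = K * ‖t‖ ^ m := by rw [norm_pow]
  have hexp : (0:ℝ) ≤ (M:ℝ)/(m:ℝ) := by positivity
  have hrw : (K * ‖t‖ ^ m) ^ ((M:ℝ)/(m:ℝ)) = K ^ ((M:ℝ)/(m:ℝ)) * ‖t‖ ^ (M:ℕ) := by
    rw [Real.mul_rpow (le_of_lt hK) (by positivity), ← Real.rpow_natCast ‖t‖ m,
      ← Real.rpow_mul (norm_nonneg t)]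
    congr 1
    rw [← Real.rpow_natCast ‖t‖ M]
    congr 1
    field_simp
  have h1 : ‖π t‖ ^ ((M:ℝ)/(m:ℝ)) ≤ K ^ ((M:ℝ)/(m:ℝ)) * ‖t‖ ^ (M:ℕ) := by
    rw [← hrw]
    exact Real.rpow_le_rpow (norm_nonneg _) hKt' hexp
  have h2 : ‖t ^ M * g t‖ = ‖t‖ ^ M * ‖g t‖ := by rw [norm_mul, norm_pow]
  rw [ge_iff_le, h2]
  have hKpow : (0:ℝ) < K ^ ((M:ℝ)/(m:ℝ)) := Real.rpow_pos_of_pos hK _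
  calc (‖g 0‖ / 2) / K ^ ((M:ℝ)/(m:ℝ)) * ‖π t‖ ^ ((M:ℝ)/(m:ℝ))
      ≤ (‖g 0‖ / 2) / K ^ ((M:ℝ)/(m:ℝ)) * (K ^ ((M:ℝ)/(m:ℝ)) * ‖t‖ ^ (M:ℕ)) := by
        apply mul_le_mul_of_nonneg_left h1
        positivity
    _ = ‖t‖ ^ M * (‖g 0‖ / 2) := by field_simp
    _ ≤ ‖t‖ ^ M * ‖g t‖ := by
        apply mul_le_mul_of_nonneg_left hgt
        positivity
end

section
/- Let n, k, d be integers with 1 ≤ k ≤ n and d ≥ 1. In the formal power series ring over ℤ, the coefficient of H^n in (1+H)^(n−1) · (dH)^k · (1+dH)^(−k) equals (−1)^(n−k) · C(n−1, k−1) · d^k · (d−1)^(n−k). -/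
/-!
Pulling out `(dH)^k` reduces the claim to the coefficient of `H^m`, `m = n - k`, in
`(1+H)^(m+K) (1+dH)^(-(K+1))` with `K = k - 1`. The coefficients of `(1 - aH)^(-(K+1))` are
`a^j C(j+K, K)`, and the trinomial revision `C(m+K, i) C(j+K, K) = C(m+K, K) C(m, i)` for
`i + j = m` turns the Cauchy product into `C(m+K, K)` times the binomial expansion of `(1+a)^m`.
With `a = -d` this is `(1-d)^m = (-1)^m (d-1)^m`.
-/

open PowerSeries Finset

theorem Nat.choose_add_add_mul_choose_add (i j K : ℕ) :
    (i + j + K).choose i * (j + K).choose K = (i + j + K).choose K * (i + j).choose i := by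
  rw [Nat.choose_symm_of_eq_add (show i + j + K = i + (j + K) by omega),
    Nat.choose_mul (Nat.le_add_left K j), Nat.choose_symm_add,
    show i + j + K - K = i + j by omega, show j + K - K = j by omega]

namespace PowerSeries

variable {R : Type*} [CommRing R]

theorem coeff_one_add_X_pow (N j : ℕ) : coeff j ((1 + X : R⟦X⟧) ^ N) = N.choose j := by
  rw [show (1 + X : R⟦X⟧) = ((1 + Polynomial.X : Polynomial R) : R⟦X⟧) by simp,
    ← Polynomial.coe_pow, Polynomial.coeff_coe, Polynomial.coeff_one_add_X_pow]

theorem coeff_mk_pow_pow (a : R) (K j : ℕ) :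
    coeff j ((mk fun s => a ^ s) ^ (K + 1)) = a ^ j * (j + K).choose K := by
  have h : (mk fun s => a ^ s) = rescale a (mk 1) := by simp [rescale_mk]
  rw [h, ← map_pow, mk_one_pow_eq_mk_choose_add, coeff_rescale, coeff_mk, add_comm j]

theorem coeff_one_add_X_pow_mul_mk_pow_pow (a : R) (m K : ℕ) :
    coeff m ((1 + X) ^ (m + K) * (mk fun s => a ^ s) ^ (K + 1))
      = (m + K).choose K * (1 + a) ^ m := by
  rw [coeff_mul, (Commute.one_left a).add_pow', mul_sum]
  refine sum_congr rfl fun ⟨i, j⟩ hij => ?_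
  obtain rfl : i + j = m := mem_antidiagonal.mp hij
  rw [coeff_one_add_X_pow, coeff_mk_pow_pow, nsmul_eq_mul, one_pow, one_mul]
  have := congrArg (Nat.cast : ℕ → R) (Nat.choose_add_add_mul_choose_add i j K)
  push_cast at this
  linear_combination a ^ j * this

end PowerSeries

theorem coeff_formula_general
    (n k d : ℕ) (hk : 1 ≤ k) (hkn : k ≤ n) :
    PowerSeries.coeff (R := ℤ) n
        ((1 + PowerSeries.X) ^ (n - 1) *
          (PowerSeries.C (R := ℤ) (d : ℤ) * PowerSeries.X) ^ k *
          (PowerSeries.mk fun s => (-(d : ℤ)) ^ s) ^ k)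
      = (-1 : ℤ) ^ (n - k) * (n - 1).choose (k - 1) * (d : ℤ) ^ k *
          ((d : ℤ) - 1) ^ (n - k) := by
  obtain ⟨K, rfl⟩ : ∃ K, k = K + 1 := ⟨k - 1, by omega⟩
  obtain ⟨m, rfl⟩ : ∃ m, n = m + (K + 1) := ⟨n - (K + 1), by omega⟩
  have hshift : (1 + X) ^ (m + (K + 1) - 1) * (C (d : ℤ) * X) ^ (K + 1) *
        (PowerSeries.mk fun s => (-(d : ℤ)) ^ s) ^ (K + 1)
      = C ((d : ℤ) ^ (K + 1)) * (X ^ (K + 1) *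
          ((1 + X) ^ (m + K) * (PowerSeries.mk fun s => (-(d : ℤ)) ^ s) ^ (K + 1))) := by
    rw [show m + (K + 1) - 1 = m + K by omega, mul_pow, ← map_pow]
    ring
  rw [hshift, coeff_C_mul, coeff_X_pow_mul', if_pos (Nat.le_add_left _ _), Nat.add_sub_cancel,
    coeff_one_add_X_pow_mul_mk_pow_pow, show m + (K + 1) - 1 = m + K by omega,
    Nat.add_sub_cancel, show (1 + -(d : ℤ)) = -1 * ((d : ℤ) - 1) by ring, mul_pow]
  ring

/-- **Coefficient computation.**  For `1 ≤ k ≤ n` and `d ≥ 1`, the coefficient of `H^n`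
in the formal power series `(1+H)^(n-1) (dH)^k (1+dH)^(-k)` over `ℤ` equals
`(-1)^(n-k) C(n-1, k-1) d^k (d-1)^(n-k)`, where `(1+dH)^(-1) = Σ_s (-d)^s H^s`. -/
theorem coeff_formula
    (n k d : ℕ) (hk : 1 ≤ k) (hkn : k ≤ n) (hd : 1 ≤ d) :
    PowerSeries.coeff (R := ℤ) n
        ((1 + PowerSeries.X) ^ (n - 1) *
          (PowerSeries.C (R := ℤ) (d : ℤ) * PowerSeries.X) ^ k *
          (PowerSeries.mk fun s => (-(d : ℤ)) ^ s) ^ k)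
      = (-1 : ℤ) ^ (n - k) * (n - 1).choose (k - 1) * (d : ℤ) ^ k *
          ((d : ℤ) - 1) ^ (n - k) :=
  coeff_formula_general n k d hk hkn
end
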